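/- Let α ∈ ℝ and κ < √2 be real. Define j(w) := w + (w² − 1)^{1/2} for w ∈ ℂ \ [−1, 1], with the branch of the square root such that j(w) > 1 for real w > 1, and define the Szegő function D(z) := ( (z − √2) / j( 1 + 2(z − √2)/(√2 − κ) ) )^{α/2} for z ∈ ℂ \ [κ, √2], using the principal branch of the power. Then: (i) D is holomorphic on ℂ \ [κ, √2]; (ii) for every z ∈ (κ, √2) the one-sided limits D₊(z) := lim_{ε↓0} D(z + iε) and D₋(z) := lim_{ε↓0} D(z − iε) exist and satisfy D₊(z)·D₋(z) = (√2 − z)^α; (iii) lim_{z→∞} D(z) = ( (√2 − κ)/4 )^{α/2}. -/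

import Mathlib

/-
Write `a = √(w - 1)` and `b = √(w + 1)` for the principal roots. Then `j(w) = (a + b)² / 2`
and `1 / j(w) = (a - b)² / 2`, and since `a` and `b` lie in a common closed quadrant of the
right half plane, `‖1 / j(w)‖ ≤ 1`. With `c = √2 - κ` and `W(z) = 1 + 2(z - √2)/c`, the base
of the power in `D` is `(z - √2) / j(W) = (c/4) (1/j(W) - 1)²`; as `re (1/j) < 1` unless
`W = 1`, it stays in the slit plane. So `D` is holomorphic wherever `j ∘ W` is, i.e. off
`[κ, √2]`, and `D → (c/4)^{α/2}` at infinity because `1/j → 0`. On the cut all principal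
branches are continuous from above, so `D₊(x) = D(x)`; the real symmetry `D(z̄) = conj D(z)`
gives `D₋ = conj D₊`, and `‖j‖ = 1` on `[-1, 1]` gives `D₊ D₋ = ‖D(x)‖² = (√2 - x)^α`.
-/

open Filter Topology Set

/-- The conformal map `j(w) = w + (w² - 1)^{1/2}` from `ℂ \ [-1, 1]` to the exterior
of the unit disk, with the branch of the square root (cut on `[-1, 1]`, realized as
`(w-1)^{1/2}(w+1)^{1/2}` with principal branches) for which `j(w) > 1` for real
`w > 1`. -/
noncomputable def jmap (w : ℂ) : ℂ :=
  w + (w - 1) ^ ((1 : ℂ) / 2) * (w + 1) ^ ((1 : ℂ) / 2)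

/-- The Szegő function
`D(z) = ((z - √2)/j(1 + 2(z - √2)/(√2 - κ)))^{α/2}`, with the principal branch of
the power. -/
noncomputable def szego (α κ : ℝ) (z : ℂ) : ℂ :=
  ((z - (Real.sqrt 2 : ℂ)) /
      jmap (1 + 2 * (z - (Real.sqrt 2 : ℂ)) / ((Real.sqrt 2 : ℂ) - (κ : ℂ))))
    ^ ((α : ℂ) / 2)

/-- The segment `[κ, √2]`, viewed as a subset of `ℂ`. -/
noncomputable def seg (κ : ℝ) : Set ℂ :=
  {z : ℂ | z.im = 0 ∧ κ ≤ z.re ∧ z.re ≤ Real.sqrt 2}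

open Complex ComplexConjugate

namespace Complex

lemma re_cpow_inv_two_nonneg (x : ℂ) : 0 ≤ (x ^ (2⁻¹ : ℂ)).re := by
  rw [cpow_inv_two_re]
  positivity

lemma im_cpow_inv_two_mul_nonneg {x y : ℂ} (h : x.im = y.im) :
    0 ≤ (x ^ (2⁻¹ : ℂ)).im * (y ^ (2⁻¹ : ℂ)).im := by
  rcases le_or_gt 0 x.im with hx | hx
  · rw [cpow_inv_two_im_eq_sqrt hx, cpow_inv_two_im_eq_sqrt (h ▸ hx)]
    positivity
  · rw [cpow_inv_two_im_eq_neg_sqrt hx, cpow_inv_two_im_eq_neg_sqrt (h ▸ hx), neg_mul_neg]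
    positivity

lemma abs_im_lt_re_cpow_inv_two {x : ℂ} (hx : 0 < x.re) :
    |(x ^ (2⁻¹ : ℂ)).im| < (x ^ (2⁻¹ : ℂ)).re := by
  rw [abs_cpow_inv_two_im, cpow_inv_two_re]
  exact Real.sqrt_lt_sqrt (by linarith [abs_re_le_norm x, le_abs_self x.re]) (by linarith)

lemma re_lt_abs_im_cpow_inv_two {x : ℂ} (hx : x.re < 0) :
    (x ^ (2⁻¹ : ℂ)).re < |(x ^ (2⁻¹ : ℂ)).im| := by
  rw [abs_cpow_inv_two_im, cpow_inv_two_re]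
  exact Real.sqrt_lt_sqrt (by linarith [abs_re_le_norm x, neg_abs_le x.re]) (by linarith)

lemma norm_sub_le_norm_add_of_re_mul_add_im_mul_nonneg {a b : ℂ}
    (h : 0 ≤ a.re * b.re + a.im * b.im) : ‖a - b‖ ≤ ‖a + b‖ := by
  rw [norm_def, norm_def]
  refine Real.sqrt_le_sqrt ?_
  simp only [normSq_apply, sub_re, sub_im, add_re, add_im]
  nlinarith

lemma sq_mem_slitPlane {u : ℂ} (hu : u.re ≠ 0) : u ^ 2 ∈ slitPlane := by
  rw [mem_slitPlane_iff, sq, mul_re, mul_im]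
  rcases eq_or_ne u.im 0 with h | h
  · left; simpa [h] using mul_self_pos.2 hu
  · right; simpa [two_mul, mul_comm] using mul_ne_zero hu h

lemma ofReal_mul_mem_slitPlane {r : ℝ} (hr : 0 < r) {u : ℂ} (hu : u ∈ slitPlane) :
    (r : ℂ) * u ∈ slitPlane := by
  rw [mem_slitPlane_iff, re_ofReal_mul, im_ofReal_mul] at *
  rcases hu with hu | hu
  · exact Or.inl (mul_pos hr hu)
  · exact Or.inr (mul_ne_zero hr.ne' hu)

lemma conj_cpow_of_mem_slitPlane {x n : ℂ} (hx : x ∈ slitPlane) (hn : conj n = n) :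
    conj x ^ n = conj (x ^ n) := by
  rw [conj_cpow x n (slitPlane_arg_ne_pi hx), hn]

lemma continuousWithinAt_cpow_const_of_re_neg_of_im_zero {x : ℂ} (n : ℂ) (hre : x.re < 0)
    (him : x.im = 0) : ContinuousWithinAt (· ^ n) {z : ℂ | 0 ≤ z.im} x := by
  have hx : x ≠ 0 := fun h => by simp [h] at hre
  refine ((continuousWithinAt_log_of_re_neg_of_im_zero hre him).mul_const n).cexp
    |>.congr_of_eventuallyEq ?_ (cpow_def_of_ne_zero hx n)
  filter_upwards [eventually_nhdsWithin_of_eventually_nhds (eventually_ne_nhds hx)] with z hz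
  exact cpow_def_of_ne_zero hz n

lemma ofReal_cpow_inv_two_of_nonneg {x : ℝ} (hx : 0 ≤ x) : (x : ℂ) ^ (2⁻¹ : ℂ) = √x := by
  apply Complex.ext
  · rw [cpow_inv_two_re, norm_real, Real.norm_of_nonneg hx, ofReal_re, ofReal_re,
      add_self_div_two]
  · rw [cpow_inv_two_im_eq_sqrt (by simp), norm_real, Real.norm_of_nonneg hx, ofReal_re]
    simp

lemma ofReal_cpow_inv_two_of_nonpos {x : ℝ} (hx : x ≤ 0) :
    (x : ℂ) ^ (2⁻¹ : ℂ) = √(-x) * I := by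
  apply Complex.ext
  · rw [cpow_inv_two_re, norm_real, Real.norm_of_nonpos hx, ofReal_re]
    simp
  · rw [cpow_inv_two_im_eq_sqrt (by simp), norm_real, Real.norm_of_nonpos hx, ofReal_re,
      show (-x - x) / 2 = -x by ring]
    simp

end Complex

lemma jmap_eq_sq (w : ℂ) :
    jmap w = ((w - 1) ^ (2⁻¹ : ℂ) + (w + 1) ^ (2⁻¹ : ℂ)) ^ 2 / 2 := by
  rw [jmap, one_div]
  linear_combination (-1 / 2 : ℂ) * cpow_ofNat_inv_pow (w - 1) 2
    - (1 / 2 : ℂ) * cpow_ofNat_inv_pow (w + 1) 2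

lemma jmap_mul_sq_sub (w : ℂ) :
    jmap w * (((w - 1) ^ (2⁻¹ : ℂ) - (w + 1) ^ (2⁻¹ : ℂ)) ^ 2 / 2) = 1 := by
  set a := (w - 1) ^ (2⁻¹ : ℂ)
  set b := (w + 1) ^ (2⁻¹ : ℂ)
  rw [jmap_eq_sq]
  linear_combination ((a ^ 2 - b ^ 2 - 2) / 4) *
    (cpow_ofNat_inv_pow (w - 1) 2 - cpow_ofNat_inv_pow (w + 1) 2)

lemma jmap_ne_zero (w : ℂ) : jmap w ≠ 0 :=
  left_ne_zero_of_mul_eq_one (jmap_mul_sq_sub w)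

lemma inv_jmap_eq_sq (w : ℂ) :
    (jmap w)⁻¹ = ((w - 1) ^ (2⁻¹ : ℂ) - (w + 1) ^ (2⁻¹ : ℂ)) ^ 2 / 2 :=
  inv_eq_of_mul_eq_one_right (jmap_mul_sq_sub w)

lemma jmap_add_inv_jmap (w : ℂ) : jmap w + (jmap w)⁻¹ = 2 * w := by
  rw [inv_jmap_eq_sq, jmap_eq_sq]
  linear_combination cpow_ofNat_inv_pow (w - 1) 2 + cpow_ofNat_inv_pow (w + 1) 2

lemma sub_one_div_jmap (w : ℂ) : (w - 1) / jmap w = ((jmap w)⁻¹ - 1) ^ 2 / 2 := by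
  rw [div_eq_mul_inv]
  linear_combination (-(jmap w)⁻¹ / 2) * jmap_add_inv_jmap w
    + (1 / 2 : ℂ) * mul_inv_cancel₀ (jmap_ne_zero w)

lemma norm_inv_jmap_le_one (w : ℂ) : ‖(jmap w)⁻¹‖ ≤ 1 := by
  have hle : ‖(jmap w)⁻¹‖ ≤ ‖jmap w‖ := by
    rw [inv_jmap_eq_sq, jmap_eq_sq, norm_div, norm_div, norm_pow, norm_pow]
    gcongr
    refine norm_sub_le_norm_add_of_re_mul_add_im_mul_nonneg
      (add_nonneg (mul_nonneg (re_cpow_inv_two_nonneg _) (re_cpow_inv_two_nonneg _))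
        (im_cpow_inv_two_mul_nonneg ?_))
    simp
  have hmul : ‖(jmap w)⁻¹‖ * ‖jmap w‖ = 1 := by
    rw [← norm_mul, inv_mul_cancel₀ (jmap_ne_zero w), norm_one]
  nlinarith [norm_nonneg (jmap w)⁻¹]

lemma re_inv_jmap_lt_one {w : ℂ} (hw : w ≠ 1) : ((jmap w)⁻¹).re < 1 := by
  by_contra! hre
  have hnorm := norm_inv_jmap_le_one w
  have hre1 : ((jmap w)⁻¹).re = 1 := le_antisymm ((re_le_norm _).trans hnorm) hre
  have him : ((jmap w)⁻¹).im = 0 := by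
    have hsq := (sq_le_one_iff₀ (norm_nonneg _)).2 hnorm
    rw [← normSq_eq_norm_sq, normSq_apply, hre1] at hsq
    nlinarith
  have hinv : (jmap w)⁻¹ = 1 := Complex.ext (by simpa using hre1) (by simpa using him)
  have hsum := jmap_add_inv_jmap w
  rw [hinv, inv_eq_one.1 hinv] at hsum
  exact hw (by linear_combination -hsum / 2)

lemma tendsto_jmap_cobounded : Tendsto jmap (Bornology.cobounded ℂ) (Bornology.cobounded ℂ) := by
  rw [← tendsto_norm_atTop_iff_cobounded]
  have hlin : Tendsto (fun w : ℂ => 2 * ‖w‖ - 1) (Bornology.cobounded ℂ) atTop :=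
    tendsto_atTop_add_const_right _ _ (tendsto_norm_cobounded_atTop.const_mul_atTop two_pos)
  refine tendsto_atTop_mono (fun w => ?_) hlin
  have h2w : ‖2 * w‖ ≤ ‖jmap w‖ + ‖(jmap w)⁻¹‖ := by
    rw [← jmap_add_inv_jmap]; exact norm_add_le _ _
  rw [norm_mul, Complex.norm_two] at h2w
  linarith [norm_inv_jmap_le_one w]

/-- Both principal roots in `j` jump across `(-∞, -1)`, but their product does not. The sign
is read off the real parts: `√(w-1) √(w+1)` lies in the right half plane when `1 < re w`,
while for `-w` both factors are closer to the imaginary axis than to the real one. -/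
lemma jmap_neg {w : ℂ} (hw : 1 < w.re) : jmap (-w) = -jmap w := by
  set a := (w - 1) ^ (2⁻¹ : ℂ)
  set b := (w + 1) ^ (2⁻¹ : ℂ)
  set a' := (-w - 1) ^ (2⁻¹ : ℂ)
  set b' := (-w + 1) ^ (2⁻¹ : ℂ)
  suffices h : a' * b' = -(a * b) by
    simp only [jmap, one_div]
    rw [h]; ring
  have hsq : (a' * b') ^ 2 = (a * b) ^ 2 := by
    rw [mul_pow, mul_pow, cpow_ofNat_inv_pow, cpow_ofNat_inv_pow, cpow_ofNat_inv_pow,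
      cpow_ofNat_inv_pow]
    ring
  refine (sq_eq_sq_iff_eq_or_eq_neg.1 hsq).resolve_left fun h => ?_
  have hpos : 0 < (a * b).re := by
    have ha : |a.im| < a.re := abs_im_lt_re_cpow_inv_two (by rw [sub_re, one_re]; linarith)
    have hb : |b.im| < b.re := abs_im_lt_re_cpow_inv_two (by rw [add_re, one_re]; linarith)
    rw [mul_re]
    linarith [mul_lt_mul'' ha hb (abs_nonneg _) (abs_nonneg _), le_abs_self (a.im * b.im),
      abs_mul a.im b.im]
  have hneg : (a' * b').re < 0 := by
    have ha : a'.re < |a'.im| :=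
      re_lt_abs_im_cpow_inv_two (by rw [sub_re, neg_re, one_re]; linarith)
    have hb : b'.re < |b'.im| :=
      re_lt_abs_im_cpow_inv_two (by rw [add_re, neg_re, one_re]; linarith)
    have hab : 0 ≤ a'.im * b'.im := im_cpow_inv_two_mul_nonneg (by simp)
    rw [mul_re, ← abs_of_nonneg hab, abs_mul]
    linarith [mul_lt_mul'' ha hb (re_cpow_inv_two_nonneg _) (re_cpow_inv_two_nonneg _)]
  rw [h] at hneg
  exact hneg.not_gt hpos

def unitSegment : Set ℂ :=
  {w : ℂ | w.im = 0 ∧ -1 ≤ w.re ∧ w.re ≤ 1}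

lemma differentiableAt_jmap_of_sub_one_mem_slitPlane {w : ℂ} (hw : w - 1 ∈ slitPlane) :
    DifferentiableAt ℂ jmap w := by
  have hw' : w + 1 ∈ slitPlane := by
    rw [mem_slitPlane_iff] at hw ⊢
    simp only [sub_re, one_re, sub_im, one_im, add_re, add_im] at hw ⊢
    rcases hw with h | h
    · left; linarith
    · right; simpa using h
  exact differentiableAt_id.add
    (((differentiableAt_id.sub_const 1).cpow_const hw).mul
      ((differentiableAt_id.add_const 1).cpow_const hw'))

lemma differentiableAt_jmap {w : ℂ} (hw : w ∉ unitSegment) : DifferentiableAt ℂ jmap w := by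
  simp only [unitSegment, mem_ofPred_eq, not_and_or, not_le] at hw
  rcases hw with h | h | h
  · exact differentiableAt_jmap_of_sub_one_mem_slitPlane (by simp [mem_slitPlane_iff, h])
  · have hodd : (fun v => -jmap (-v)) =ᶠ[𝓝 w] jmap := by
      filter_upwards [(isOpen_lt continuous_re continuous_const).mem_nhds h] with v hv
      rw [← jmap_neg (w := -v) (by rw [neg_re]; linarith [show v.re < -1 from hv]), neg_neg]
    refine DifferentiableAt.congr_of_eventuallyEq ?_ hodd.symm
    have hneg : DifferentiableAt ℂ jmap (-w) :=
      differentiableAt_jmap_of_sub_one_mem_slitPlane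
        (mem_slitPlane_iff.2 (Or.inl (by rw [sub_re, neg_re, one_re]; linarith)))
    exact (hneg.comp w differentiableAt_id.neg).neg
  · exact differentiableAt_jmap_of_sub_one_mem_slitPlane
      (mem_slitPlane_iff.2 (Or.inl (by rw [sub_re, one_re]; linarith)))

lemma jmap_conj {w : ℂ} (hw : w.im ≠ 0) : jmap (conj w) = conj (jmap w) := by
  have hsub : w - 1 ∈ slitPlane := mem_slitPlane_iff.2 (Or.inr (by simpa using hw))
  have hadd : w + 1 ∈ slitPlane := mem_slitPlane_iff.2 (Or.inr (by simpa using hw))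
  have hhalf : conj ((1 : ℂ) / 2) = 1 / 2 := by rw [map_div₀, map_one, map_ofNat]
  simp only [jmap]
  rw [show conj w - 1 = conj (w - 1) by simp, show conj w + 1 = conj (w + 1) by simp,
    conj_cpow_of_mem_slitPlane hsub hhalf, conj_cpow_of_mem_slitPlane hadd hhalf]
  simp

lemma jmap_ofReal {t : ℝ} (ht : t ∈ Icc (-1) 1) : jmap t = t + √(1 - t ^ 2) * I := by
  rw [jmap, one_div, show (t : ℂ) - 1 = ((t - 1 : ℝ) : ℂ) by push_cast; ring,
    show (t : ℂ) + 1 = ((t + 1 : ℝ) : ℂ) by push_cast; ring,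
    ofReal_cpow_inv_two_of_nonpos (by linarith [ht.2]),
    ofReal_cpow_inv_two_of_nonneg (by linarith [ht.1]),
    show 1 - t ^ 2 = -(t - 1) * (t + 1) by ring, Real.sqrt_mul (by linarith [ht.2])]
  push_cast
  ring

lemma continuousWithinAt_jmap {t : ℝ} (ht : t ∈ Ioo (-1) 1) :
    ContinuousWithinAt jmap {w : ℂ | 0 ≤ w.im} t := by
  have hsub : ContinuousWithinAt (fun w : ℂ => (w - 1) ^ ((1 : ℂ) / 2)) {w | 0 ≤ w.im} t :=
    (continuousWithinAt_cpow_const_of_re_neg_of_im_zero _ (by simp [ht.2]) (by simp)).comp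
      (continuousWithinAt_id.sub continuousWithinAt_const) (fun w hw => by simpa using hw)
  have ht1 : (t : ℂ) + 1 ∈ slitPlane :=
    mem_slitPlane_iff.2 (Or.inl (by rw [add_re, one_re, ofReal_re]; linarith [ht.1]))
  have hadd : ContinuousWithinAt (fun w : ℂ => (w + 1) ^ ((1 : ℂ) / 2)) {w | 0 ≤ w.im} t :=
    ((continuousAt_cpow_const ht1).comp (f := fun w : ℂ => w + 1) (by fun_prop)).continuousWithinAt
  exact continuousWithinAt_id.add (hsub.mul hadd)

noncomputable def segCoord (κ : ℝ) (z : ℂ) : ℂ :=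
  1 + 2 * (z - (Real.sqrt 2 : ℂ)) / ((Real.sqrt 2 : ℂ) - (κ : ℂ))

noncomputable def szegoBase (κ : ℝ) (z : ℂ) : ℂ :=
  (z - (Real.sqrt 2 : ℂ)) / jmap (segCoord κ z)

lemma szego_eq_szegoBase_cpow (α κ : ℝ) (z : ℂ) :
    szego α κ z = szegoBase κ z ^ ((α : ℂ) / 2) := rfl

section segCoord

variable {κ : ℝ}

lemma segCoord_eq_ofReal_mul (z : ℂ) :
    segCoord κ z = 1 + ((2 / (√2 - κ) : ℝ) : ℂ) * (z - (√2 : ℂ)) := by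
  rw [segCoord]
  push_cast
  ring

lemma segCoord_re (z : ℂ) : (segCoord κ z).re = 1 + 2 / (√2 - κ) * (z.re - √2) := by
  rw [segCoord_eq_ofReal_mul, add_re, one_re, re_ofReal_mul, sub_re, ofReal_re]

lemma segCoord_im (z : ℂ) : (segCoord κ z).im = 2 / (√2 - κ) * z.im := by
  rw [segCoord_eq_ofReal_mul, add_im, one_im, im_ofReal_mul, sub_im, ofReal_im, sub_zero,
    zero_add]

lemma segCoord_conj (z : ℂ) : segCoord κ (conj z) = conj (segCoord κ z) := by
  simp only [segCoord_eq_ofReal_mul, map_add, map_one, map_mul, map_sub, conj_ofReal]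

lemma differentiable_segCoord : Differentiable ℂ (segCoord κ) := by
  unfold segCoord
  fun_prop

lemma sub_sqrt_two_eq_mul_segCoord_sub_one (hκ : κ ≠ √2) (z : ℂ) :
    z - (√2 : ℂ) = ((√2 - κ : ℝ) : ℂ) / 2 * (segCoord κ z - 1) := by
  have hc : (√2 : ℂ) - κ ≠ 0 := sub_ne_zero.2 (by exact_mod_cast hκ.symm)
  rw [segCoord]
  push_cast
  field_simp
  ring

lemma segCoord_ne_one (hκ : κ ≠ √2) {z : ℂ} (hz : z ≠ √2) : segCoord κ z ≠ 1 := by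
  intro h
  apply hz
  rw [← sub_eq_zero, sub_sqrt_two_eq_mul_segCoord_sub_one hκ, h, sub_self, mul_zero]

lemma segCoord_notMem_unitSegment (hκ : κ < √2) {z : ℂ} (hz : z ∉ seg κ) :
    segCoord κ z ∉ unitSegment := by
  have hr : 0 < 2 / (√2 - κ) := div_pos two_pos (sub_pos.2 hκ)
  have hrκ : 2 / (√2 - κ) * (κ - √2) = -2 := by
    field_simp [(sub_pos.2 hκ).ne']
    ring
  rintro ⟨him, hlo, hhi⟩
  rw [segCoord_im] at him
  rw [segCoord_re] at hlo hhi
  exact hz ⟨(mul_eq_zero.1 him).resolve_left hr.ne', by nlinarith, by nlinarith⟩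

lemma exists_segCoord_ofReal_eq (hκ : κ < √2) {x : ℝ} (hx : x ∈ Ioo κ √2) :
    ∃ t ∈ Ioo (-1 : ℝ) 1, segCoord κ x = t := by
  have hc : 0 < √2 - κ := sub_pos.2 hκ
  refine ⟨1 + 2 / (√2 - κ) * (x - √2), ⟨?_, ?_⟩, ?_⟩
  · have : 2 / (√2 - κ) * (x - √2) = 2 / (√2 - κ) * (x - κ) - 2 := by
      field_simp
      ring
    rw [this]
    linarith [mul_pos (div_pos two_pos hc) (sub_pos.2 hx.1)]
  · linarith [mul_neg_of_pos_of_neg (div_pos two_pos hc) (sub_neg.2 hx.2)]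
  · rw [segCoord_eq_ofReal_mul]
    push_cast
    ring

lemma tendsto_segCoord_cobounded (hκ : κ ≠ √2) :
    Tendsto (segCoord κ) (Bornology.cobounded ℂ) (Bornology.cobounded ℂ) := by
  have hr : ((2 / (√2 - κ) : ℝ) : ℂ) ≠ 0 := by
    exact_mod_cast div_ne_zero two_ne_zero (sub_ne_zero.2 hκ.symm)
  have := (tendsto_const_add_cobounded (1 : ℂ)).comp
    ((tendsto_mul_left_cobounded hr).comp (tendsto_sub_const_cobounded (√2 : ℂ)))
  simpa only [Function.comp_def, ← segCoord_eq_ofReal_mul] using this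

end segCoord

section szego

variable {α κ : ℝ}

lemma szegoBase_eq (hκ : κ ≠ √2) (z : ℂ) :
    szegoBase κ z = (((√2 - κ) / 4 : ℝ) : ℂ) * ((jmap (segCoord κ z))⁻¹ - 1) ^ 2 := by
  rw [szegoBase, sub_sqrt_two_eq_mul_segCoord_sub_one hκ, mul_div_assoc, sub_one_div_jmap]
  push_cast
  ring

lemma szegoBase_mem_slitPlane (hκ : κ < √2) {z : ℂ} (hz : z ≠ √2) :
    szegoBase κ z ∈ slitPlane := by
  rw [szegoBase_eq hκ.ne]
  refine ofReal_mul_mem_slitPlane (by linarith) (sq_mem_slitPlane ?_)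
  rw [sub_re, one_re]
  exact (sub_neg.2 (re_inv_jmap_lt_one (segCoord_ne_one hκ.ne hz))).ne

lemma differentiableAt_szegoBase (hκ : κ < √2) {z : ℂ} (hz : z ∉ seg κ) :
    DifferentiableAt ℂ (szegoBase κ) z :=
  (differentiableAt_id.sub_const _).div
    ((differentiableAt_jmap (segCoord_notMem_unitSegment hκ hz)).comp z
      differentiable_segCoord.differentiableAt)
    (jmap_ne_zero _)

lemma differentiableOn_szego (hκ : κ < √2) : DifferentiableOn ℂ (szego α κ) (seg κ)ᶜ := by
  intro z hz
  have hz' : z ≠ √2 := by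
    rintro rfl
    exact hz ⟨by simp, by simpa using hκ.le, by simp⟩
  exact ((differentiableAt_szegoBase hκ hz).cpow_const
    (szegoBase_mem_slitPlane hκ hz')).differentiableWithinAt

lemma szego_conj (hκ : κ < √2) {z : ℂ} (hz : z.im ≠ 0) :
    szego α κ (conj z) = conj (szego α κ z) := by
  have hz' : z ≠ √2 := fun h => hz (by simp [h])
  have hW : (segCoord κ z).im ≠ 0 := by
    rw [segCoord_im]
    exact mul_ne_zero (div_pos two_pos (sub_pos.2 hκ)).ne' hz
  have hbase : szegoBase κ (conj z) = conj (szegoBase κ z) := by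
    rw [szegoBase, szegoBase, segCoord_conj, jmap_conj hW, map_div₀, map_sub, conj_ofReal]
  rw [szego_eq_szegoBase_cpow, szego_eq_szegoBase_cpow, hbase,
    conj_cpow_of_mem_slitPlane (szegoBase_mem_slitPlane hκ hz')
      (by rw [map_div₀, conj_ofReal, map_ofNat])]

lemma continuousWithinAt_szego (hκ : κ < √2) {x : ℝ} (hx : x ∈ Ioo κ √2) :
    ContinuousWithinAt (szego α κ) {z : ℂ | 0 ≤ z.im} x := by
  obtain ⟨t, ht, hxt⟩ := exists_segCoord_ofReal_eq hκ hx
  have hbase : ContinuousWithinAt (szegoBase κ) {z : ℂ | 0 ≤ z.im} x :=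
    (continuousWithinAt_id.sub continuousWithinAt_const).div
      ((continuousWithinAt_jmap ht).comp_of_eq
        differentiable_segCoord.continuous.continuousWithinAt
        (fun z (hz : 0 ≤ z.im) => by
          simpa only [mem_ofPred_eq, segCoord_im] using
            mul_nonneg (div_pos two_pos (sub_pos.2 hκ)).le hz)
        hxt)
      (jmap_ne_zero _)
  exact (continuousAt_cpow_const (szegoBase_mem_slitPlane hκ (by exact_mod_cast hx.2.ne))
    ).comp_continuousWithinAt hbase

lemma tendsto_ofReal_add_mul_I_nhdsWithin (x : ℝ) :
    Tendsto (fun ε : ℝ => (x : ℂ) + ε * I) (𝓝[>] 0) (𝓝[{z : ℂ | 0 ≤ z.im}] x) := by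
  refine tendsto_nhdsWithin_iff.2 ⟨?_, ?_⟩
  · have : Continuous fun ε : ℝ => (x : ℂ) + ε * I := by fun_prop
    simpa using this.continuousWithinAt.tendsto (s := Ioi 0) (x := 0)
  · filter_upwards [self_mem_nhdsWithin] with ε (hε : 0 < ε)
    simpa using hε.le

lemma tendsto_szego_add_mul_I (hκ : κ < √2) {x : ℝ} (hx : x ∈ Ioo κ √2) :
    Tendsto (fun ε : ℝ => szego α κ (x + ε * I)) (𝓝[>] 0) (𝓝 (szego α κ x)) :=
  (continuousWithinAt_szego hκ hx).tendsto.comp (tendsto_ofReal_add_mul_I_nhdsWithin x)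

lemma tendsto_szego_sub_mul_I (hκ : κ < √2) {x : ℝ} (hx : x ∈ Ioo κ √2) :
    Tendsto (fun ε : ℝ => szego α κ (x - ε * I)) (𝓝[>] 0) (𝓝 (conj (szego α κ x))) := by
  refine ((continuous_conj.tendsto _).comp (tendsto_szego_add_mul_I hκ hx)).congr' ?_
  filter_upwards [self_mem_nhdsWithin] with ε (hε : 0 < ε)
  have hconj : (x : ℂ) - ε * I = conj ((x : ℂ) + ε * I) := by
    rw [map_add, map_mul, conj_ofReal, conj_ofReal, conj_I]
    ring
  rw [Function.comp_apply, hconj, szego_conj hκ (by simpa using hε.ne')]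

lemma norm_jmap_ofReal {t : ℝ} (ht : t ∈ Icc (-1) 1) : ‖jmap t‖ = 1 := by
  rw [jmap_ofReal ht, norm_add_mul_I, Real.sq_sqrt (by nlinarith [ht.1, ht.2]),
    add_sub_cancel, Real.sqrt_one]

lemma szego_mul_conj (hκ : κ < √2) {x : ℝ} (hx : x ∈ Ioo κ √2) :
    szego α κ x * conj (szego α κ x) = (((√2 - x) ^ α : ℝ) : ℂ) := by
  obtain ⟨t, ht, hxt⟩ := exists_segCoord_ofReal_eq hκ hx
  have hbase : ‖szegoBase κ x‖ = √2 - x := by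
    rw [szegoBase, hxt, norm_div, norm_jmap_ofReal (Ioo_subset_Icc_self ht), div_one,
      ← ofReal_sub, norm_real, Real.norm_of_nonpos (by linarith [hx.2]), neg_sub]
  rw [mul_conj, normSq_eq_norm_sq, szego_eq_szegoBase_cpow,
    show (α : ℂ) / 2 = ((α / 2 : ℝ) : ℂ) by push_cast; ring, norm_cpow_real, hbase,
    ← Real.rpow_natCast, ← Real.rpow_mul (by linarith [hx.2])]
  norm_num

lemma tendsto_szegoBase_cocompact (hκ : κ ≠ √2) :
    Tendsto (szegoBase κ) (cocompact ℂ) (𝓝 (((√2 - κ) / 4 : ℝ) : ℂ)) := by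
  rw [← Metric.cobounded_eq_cocompact]
  have hinv : Tendsto (fun z => (jmap (segCoord κ z))⁻¹) (Bornology.cobounded ℂ) (𝓝 0) :=
    tendsto_inv₀_cobounded.comp (tendsto_jmap_cobounded.comp (tendsto_segCoord_cobounded hκ))
  have := ((hinv.sub_const 1).pow 2).const_mul (((√2 - κ) / 4 : ℝ) : ℂ)
  convert this using 1
  · exact funext (szegoBase_eq hκ)
  · simp

lemma tendsto_szego_cocompact (hκ : κ < √2) :
    Tendsto (szego α κ) (cocompact ℂ) (𝓝 ((((√2 - κ) / 4) ^ (α / 2) : ℝ) : ℂ)) := by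
  have hpos : 0 < (√2 - κ) / 4 := by linarith
  have hlim := ((continuousAt_cpow_const (b := (α : ℂ) / 2)
    (ofReal_mem_slitPlane.2 hpos)).tendsto).comp (tendsto_szegoBase_cocompact hκ.ne)
  have hval : ((((√2 - κ) / 4) ^ (α / 2) : ℝ) : ℂ) =
      (((√2 - κ) / 4 : ℝ) : ℂ) ^ ((α : ℂ) / 2) := by
    rw [ofReal_cpow hpos.le]
    push_cast
    ring
  rw [hval]
  exact hlim

end szego

/-- Properties of the Szegő function: it is holomorphic off `[κ, √2]`, its one-sided
boundary values on `(κ, √2)` exist and satisfy `D₊(z)·D₋(z) = (√2 - z)^α`, and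
`D(z) → ((√2 - κ)/4)^{α/2}` as `z → ∞`. -/
theorem szego_function_properties (α κ : ℝ) (hκ : κ < Real.sqrt 2) :
    DifferentiableOn ℂ (szego α κ) (seg κ)ᶜ ∧
    (∀ z : ℝ, z ∈ Ioo κ (Real.sqrt 2) →
      ∃ Dp Dm : ℂ,
        Tendsto (fun ε : ℝ => szego α κ ((z : ℂ) + (ε : ℂ) * Complex.I))
          (𝓝[>] 0) (𝓝 Dp) ∧
        Tendsto (fun ε : ℝ => szego α κ ((z : ℂ) - (ε : ℂ) * Complex.I))
          (𝓝[>] 0) (𝓝 Dm) ∧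
        Dp * Dm = (((Real.sqrt 2 - z) ^ α : ℝ) : ℂ)) ∧
    Tendsto (szego α κ) (cocompact ℂ)
      (𝓝 ((((Real.sqrt 2 - κ) / 4) ^ (α / 2) : ℝ) : ℂ)) :=
  ⟨differentiableOn_szego hκ,
    fun _ hx => ⟨_, _, tendsto_szego_add_mul_I hκ hx, tendsto_szego_sub_mul_I hκ hx,
      szego_mul_conj hκ hx⟩,
    tendsto_szego_cocompact hκ⟩
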